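/- arXiv:2506.14656 — 2 statements merged into one kernel-verified Lean document; each statement's English description precedes it below -/
import Mathlib

section
/- For every complex number v with |v| < 1, the series Σ v^(c+d), taken over all pairs (c, d) of nonnegative integers with 3 dividing c + 2d, converges absolutely and equals (1 − v + v²) / ((1 − v)² (1 + v + v²)). -/
/-!
Since `c + 2d ≡ c - d (mod 3)`, the pairs in the sum are exactly `(3a + r, 3b + r)` with
`a, b ∈ ℕ` and `r < 3`, and `v ^ (c + d) = (v³)ᵃ (v³)ᵇ (v²)ʳ` factors over this reindexing.
The sum is therefore `(1 + v² + v⁴) / (1 - v³)²`, which simplifies to the stated closed form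
because `1 + v² + v⁴ = (1 + v + v²)(1 - v + v²)` and `1 - v³ = (1 - v)(1 + v + v²)`.
-/

def congrModThreeParam (x : ℕ × ℕ × Fin 3) : ℕ × ℕ :=
  (3 * x.1 + x.2.2, 3 * x.2.1 + x.2.2)

theorem congrModThreeParam_injective : Function.Injective congrModThreeParam := by
  rintro ⟨a, b, r⟩ ⟨a', b', r'⟩ h
  simp only [congrModThreeParam, Prod.mk.injEq] at h
  have hr : r = r' := Fin.ext (by omega)
  subst hr
  simp only [Prod.mk.injEq, and_true]
  omega

theorem three_dvd_add_two_mul_iff_mem_range_congrModThreeParam {p : ℕ × ℕ} :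
    3 ∣ p.1 + 2 * p.2 ↔ p ∈ Set.range congrModThreeParam := by
  obtain ⟨c, d⟩ := p
  constructor
  · intro h
    exact ⟨(c / 3, d / 3, ⟨c % 3, Nat.mod_lt _ (by norm_num)⟩), by
      simp only [congrModThreeParam, Prod.mk.injEq]; omega⟩
  · rintro ⟨⟨a, b, r⟩, h⟩
    simp only [congrModThreeParam, Prod.mk.injEq] at h
    omega

theorem hasSum_geometric_mul_geometric_mul {K ι : Type*} [NormedDivisionRing K] [CompleteSpace K]
    {w : K} (hw : ‖w‖ < 1) {u : ι → K} (hu : Summable fun i => ‖u i‖) :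
    HasSum (fun x : ℕ × ℕ × ι => w ^ x.1 * (w ^ x.2.1 * u x.2.2))
      ((1 - w)⁻¹ * ((1 - w)⁻¹ * ∑' i, u i)) := by
  have hgeom : HasSum (fun n : ℕ => w ^ n) (1 - w)⁻¹ := hasSum_geometric_of_norm_lt_one hw
  have hgeom_norm : Summable fun n : ℕ => ‖w ^ n‖ := summable_norm_geometric_of_norm_lt_one hw
  have hinner_norm : Summable fun y : ℕ × ι => ‖w ^ y.1 * u y.2‖ := hgeom_norm.mul_norm hu
  have hinner : HasSum (fun y : ℕ × ι => w ^ y.1 * u y.2) ((1 - w)⁻¹ * ∑' i, u i) :=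
    hgeom.mul hu.of_norm.hasSum hinner_norm.of_norm
  -- naming both factors spares the unifier a costly higher-order match against `w ^ x.1 * _`
  exact HasSum.mul (f := fun n : ℕ => w ^ n) (g := fun y : ℕ × ι => w ^ y.1 * u y.2) hgeom hinner
    (summable_mul_of_summable_norm (f := fun n : ℕ => w ^ n)
      (g := fun y : ℕ × ι => w ^ y.1 * u y.2) hgeom_norm hinner_norm)

theorem inv_one_sub_pow_three_sq_mul {K : Type*} [Field K] {v : K} (hv : 1 - v ^ 3 ≠ 0) :
    (1 - v ^ 3)⁻¹ * ((1 - v ^ 3)⁻¹ * (1 + v ^ 2 + v ^ 4)) =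
      (1 - v + v ^ 2) / ((1 - v) ^ 2 * (1 + v + v ^ 2)) := by
  have hfac : 1 - v ^ 3 = (1 - v) * (1 + v + v ^ 2) := by ring
  rw [hfac] at hv ⊢
  have h₁ : 1 - v ≠ 0 := left_ne_zero_of_mul hv
  have h₂ : 1 + v + v ^ 2 ≠ 0 := right_ne_zero_of_mul hv
  field_simp
  ring

theorem hasSum_ite_three_dvd_add_two_mul {K : Type*} [NormedField K] [CompleteSpace K] {v : K}
    (hv : ‖v ^ 3‖ < 1) :
    HasSum (fun p : ℕ × ℕ => if 3 ∣ p.1 + 2 * p.2 then v ^ (p.1 + p.2) else 0)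
      ((1 - v ^ 3)⁻¹ * ((1 - v ^ 3)⁻¹ * (1 + v ^ 2 + v ^ 4))) := by
  have hsum := hasSum_geometric_mul_geometric_mul hv
    (u := fun r : Fin 3 => (v ^ 2) ^ (r : ℕ)) Summable.of_finite
  rw [tsum_fintype, Fin.sum_univ_three] at hsum
  refine (congrModThreeParam_injective.hasSum_iff fun p hp => if_neg fun h => hp
    (three_dvd_add_two_mul_iff_mem_range_congrModThreeParam.mp h)).mp ?_
  convert hsum.congr_fun fun ⟨a, b, r⟩ => ?_ using 3
  · simp only [Fin.val_zero, Fin.val_one, Fin.val_two]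
    ring
  · rw [Function.comp_apply,
      if_pos (three_dvd_add_two_mul_iff_mem_range_congrModThreeParam.mpr ⟨_, rfl⟩)]
    simp only [congrModThreeParam]
    ring

/-- For `|v| < 1`, the series `Σ v^(c+d)` over pairs `(c, d)` of nonnegative integers
with `3 ∣ c + 2d` converges absolutely and equals
`(1 − v + v²) / ((1 − v)² (1 + v + v²))`. -/
theorem stmt_9 (v : ℂ) (hv : ‖v‖ < 1) :
    Summable (fun p : ℕ × ℕ =>
        ‖if 3 ∣ p.1 + 2 * p.2 then v ^ (p.1 + p.2) else 0‖) ∧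
    ∑' p : ℕ × ℕ, (if 3 ∣ p.1 + 2 * p.2 then v ^ (p.1 + p.2) else 0) =
      (1 - v + v ^ 2) / ((1 - v) ^ 2 * (1 + v + v ^ 2)) := by
  constructor
  · have hgeom := summable_geometric_of_lt_one (norm_nonneg v) hv
    refine (hgeom.mul_of_nonneg hgeom (fun _ => by positivity) fun _ => by positivity)
      |>.of_nonneg_of_le (fun _ => norm_nonneg _) fun p => ?_
    split_ifs
    · rw [norm_pow, pow_add]
    · rw [norm_zero]
      positivity
  · have hv3 : ‖v ^ 3‖ < 1 := by
      rw [norm_pow]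
      exact pow_lt_one₀ (norm_nonneg v) hv (by norm_num)
    have hv3_ne : 1 - v ^ 3 ≠ 0 := (isUnit_one_sub_of_norm_lt_one hv3).ne_zero
    rw [(hasSum_ite_three_dvd_add_two_mul hv3).tsum_eq, inv_one_sub_pow_three_sq_mul hv3_ne]
end

section
/- For every complex number v with |v| < 1, the series Σ v^(c+d), taken over all pairs (c, d) of nonnegative integers with (c, d) ≠ (0, 0) and 3 dividing c + 2d, converges absolutely and equals v² (1 + v − v²) / ((1 − v)² (1 + v + v²)). -/
/-!
Since `2 ≡ -1 (mod 3)`, the condition `3 ∣ c + 2d` says `c ≡ d (mod 3)`, i.e.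
`(c, d) = (3a + r, 3b + r)` with `r < 3` and `a, b ∈ ℕ` uniquely. The full series therefore
factors as `(1 + v² + v⁴) · (Σ v^{3a}) · (Σ v^{3b}) = (1 + v² + v⁴) / (1 - v³)²`, and removing
the term `1` at `(0, 0)` leaves the stated rational function.
-/

open Finset

def modEqPairOfFin (m : ℕ) (x : Fin m × ℕ × ℕ) : ℕ × ℕ :=
  (m * x.2.1 + x.1, m * x.2.2 + x.1)

theorem modEqPairOfFin_injective (m : ℕ) : Function.Injective (modEqPairOfFin m) := by
  have divMod (r : Fin m) (a : ℕ) : (m * a + r) / m = a ∧ (m * a + r) % m = r := by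
    have hm : 0 < m := r.pos
    constructor
    · rw [Nat.mul_add_div hm, Nat.div_eq_of_lt r.2, add_zero]
    · rw [Nat.mul_add_mod, Nat.mod_eq_of_lt r.2]
  rintro ⟨r, a, b⟩ ⟨r', a', b'⟩ h
  simp only [modEqPairOfFin, Prod.mk.injEq] at h
  obtain ⟨h₁, h₂⟩ := h
  have hr : r = r' := Fin.ext <| by rw [← (divMod r a).2, h₁, (divMod r' a').2]
  subst hr
  rw [← (divMod r a).1, h₁, (divMod r a').1, ← (divMod r b).1, h₂, (divMod r b').1]

theorem range_modEqPairOfFin {m : ℕ} (hm : 0 < m) :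
    Set.range (modEqPairOfFin m) = {p | p.1 ≡ p.2 [MOD m]} := by
  ext ⟨c, d⟩
  constructor
  · rintro ⟨⟨r, a, b⟩, h⟩
    simp only [modEqPairOfFin, Prod.mk.injEq] at h
    obtain ⟨rfl, rfl⟩ := h
    simp [Nat.ModEq, Nat.add_mod]
  · intro h
    exact ⟨(⟨c % m, Nat.mod_lt c hm⟩, c / m, d / m), by
      simp only [modEqPairOfFin, Prod.mk.injEq]
      exact ⟨Nat.div_add_mod c m, h ▸ Nat.div_add_mod d m⟩⟩

section

variable {𝕜 : Type*} [NormedField 𝕜] {v : 𝕜}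

def modEqPairTerm (m : ℕ) (v : 𝕜) (p : ℕ × ℕ) : 𝕜 :=
  if p.1 ≡ p.2 [MOD m] then v ^ (p.1 + p.2) else 0

theorem modEqPairTerm_comp_modEqPairOfFin (m : ℕ) (v : 𝕜) :
    modEqPairTerm m v ∘ modEqPairOfFin m =
      fun x => v ^ (2 * (x.1 : ℕ)) * ((v ^ m) ^ x.2.1 * (v ^ m) ^ x.2.2) := by
  ext ⟨r, a, b⟩
  have hmod : (m * a + r) ≡ (m * b + r) [MOD m] := by simp [Nat.ModEq, Nat.add_mod]
  simp only [Function.comp_apply, modEqPairTerm, modEqPairOfFin, hmod, if_true]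
  ring

theorem summable_norm_modEqPairTerm (m : ℕ) (hv : ‖v‖ < 1) :
    Summable fun p => ‖modEqPairTerm m v p‖ := by
  have hgeom : Summable fun n : ℕ => ‖v ^ n‖ := summable_norm_geometric_of_norm_lt_one hv
  refine (hgeom.mul_norm hgeom).of_nonneg_of_le (fun _ => norm_nonneg _) fun p => ?_
  rw [modEqPairTerm, ← pow_add]
  split_ifs
  · exact le_rfl
  · rw [norm_zero]; positivity

theorem hasSum_modEqPairTerm [CompleteSpace 𝕜] {m : ℕ} (hm : 0 < m) (hv : ‖v‖ < 1) :
    HasSum (modEqPairTerm m v) ((∑ r ∈ range m, v ^ (2 * r)) / (1 - v ^ m) ^ 2) := by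
  have hvm : ‖v ^ m‖ < 1 := by
    rw [norm_pow]; exact pow_lt_one₀ (norm_nonneg v) hv hm.ne'
  have hnorm : Summable fun n : ℕ => ‖(v ^ m) ^ n‖ := summable_norm_geometric_of_norm_lt_one hvm
  have hgeom := hasSum_geometric_of_norm_lt_one hvm
  have hgeom₂ : HasSum (fun q : ℕ × ℕ => (v ^ m) ^ q.1 * (v ^ m) ^ q.2)
      ((1 - v ^ m)⁻¹ * (1 - v ^ m)⁻¹) :=
    hgeom.mul hgeom (hnorm.mul_norm hnorm).of_norm
  have hfin : HasSum (fun r : Fin m => v ^ (2 * (r : ℕ))) (∑ r ∈ range m, v ^ (2 * r)) := by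
    rw [← Fin.sum_univ_eq_sum_range]; exact hasSum_fintype _
  have hsummable := (summable_norm_modEqPairTerm m hv).of_norm.comp_injective
    (modEqPairOfFin_injective m)
  rw [modEqPairTerm_comp_modEqPairOfFin] at hsummable
  rw [← (modEqPairOfFin_injective m).hasSum_iff, modEqPairTerm_comp_modEqPairOfFin,
    div_eq_mul_inv, sq, mul_inv]
  · exact HasSum.mul (f := fun r : Fin m => v ^ (2 * (r : ℕ)))
      (g := fun q : ℕ × ℕ => (v ^ m) ^ q.1 * (v ^ m) ^ q.2) hfin hgeom₂ hsummable
  · intro p hp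
    rw [range_modEqPairOfFin hm] at hp
    exact if_neg hp

end

theorem Nat.three_dvd_add_two_mul_iff_modEq {c d : ℕ} : 3 ∣ c + 2 * d ↔ c ≡ d [MOD 3] := by
  rw [Nat.ModEq]; omega

/-- For `|v| < 1`, the series `Σ v^(c+d)` over pairs `(c, d)` of nonnegative integers
with `(c, d) ≠ (0, 0)` and `3 ∣ c + 2d` converges absolutely and equals
`v² (1 + v − v²) / ((1 − v)² (1 + v + v²))`. -/
theorem stmt_10 (v : ℂ) (hv : ‖v‖ < 1) :
    Summable (fun p : ℕ × ℕ =>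
        ‖if 3 ∣ p.1 + 2 * p.2 ∧ p ≠ (0, 0) then v ^ (p.1 + p.2) else 0‖) ∧
    ∑' p : ℕ × ℕ, (if 3 ∣ p.1 + 2 * p.2 ∧ p ≠ (0, 0) then v ^ (p.1 + p.2) else 0) =
      v ^ 2 * (1 + v - v ^ 2) / ((1 - v) ^ 2 * (1 + v + v ^ 2)) := by
  have hterm : (fun p : ℕ × ℕ => if 3 ∣ p.1 + 2 * p.2 ∧ p ≠ (0, 0) then v ^ (p.1 + p.2) else 0) =
      fun p => if p = (0, 0) then 0 else modEqPairTerm 3 v p := by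
    ext p
    by_cases hp : p = (0, 0) <;> simp [hp, modEqPairTerm, Nat.three_dvd_add_two_mul_iff_modEq]
  have hv3 : 1 - v ^ 3 ≠ 0 := fun h => (pow_lt_one₀ (norm_nonneg v) hv three_ne_zero).ne
    (by rw [← norm_pow, ← sub_eq_zero.1 h, norm_one])
  have hfactor : 1 - v ^ 3 = (1 - v) * (1 + v + v ^ 2) := by ring
  obtain ⟨h1, h2⟩ := mul_ne_zero_iff.1 (hfactor ▸ hv3)
  refine ⟨(summable_norm_modEqPairTerm 3 hv).of_nonneg_of_le (fun _ => norm_nonneg _)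
    fun p => ?_, ?_⟩
  · rw [congrFun hterm p]
    split_ifs <;> simp
  have hsum : HasSum (modEqPairTerm 3 v) _ := hasSum_modEqPairTerm (by norm_num) hv
  rw [hterm, (hasSum_ite_sub_hasSum hsum (0, 0)).tsum_eq]
  norm_num [modEqPairTerm, Finset.sum_range_succ, hfactor]
  field_simp
  ring
end
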